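/- arXiv:2107.00584 — 6 statements merged into one kernel-verified Lean document; each statement's English description precedes it below -/
import Mathlib

section
/- Let t be a positive integer and G a finite abelian group. Then the number of φ_t-periodic elements of G equals the greatest divisor of |G| that is relatively prime to t. -/
/-- Let t be a positive integer and G a finite abelian group. Then the number
of φ_t-periodic elements of G equals the greatest divisor of |G| relatively prime to t. -/
theorem stmt3 (t : ℕ) (ht : 0 < t) (G : Type*) [CommGroup G] [Finite G]
    (ω : ℕ) (hωdvd : ω ∣ Nat.card G) (hωcop : Nat.Coprime ω t)
    (hωmax : ∀ d : ℕ, d ∣ Nat.card G → Nat.Coprime d t → d ≤ ω) :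
    Nat.card {g : G // ∃ m : ℕ, 1 ≤ m ∧ g ^ t ^ m = g} = ω := by
  have hnpos : 0 < Nat.card G := Nat.card_pos
  have hωpos : 0 < ω := Nat.pos_of_dvd_of_pos hωdvd hnpos
  -- any divisor of |G| coprime to t divides ω
  have hdvdω : ∀ d : ℕ, d ∣ Nat.card G → Nat.Coprime d t → d ∣ ω := by
    intro d hd hc
    have h1 : Nat.lcm ω d ∣ Nat.card G := Nat.lcm_dvd hωdvd hd
    have h2 : Nat.Coprime (Nat.lcm ω d) t :=
      Nat.Coprime.coprime_dvd_left (Nat.lcm_dvd (dvd_mul_right ω d) (dvd_mul_left d ω))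
        (hωcop.mul hc)
    have h3 : Nat.lcm ω d ≤ ω := hωmax _ h1 h2
    have h4 : ω ∣ Nat.lcm ω d := Nat.dvd_lcm_left _ _
    have h5 : Nat.lcm ω d = ω := le_antisymm h3 (Nat.le_of_dvd (Nat.pos_of_dvd_of_pos h1 hnpos) h4)
    exact h5 ▸ Nat.dvd_lcm_right ω d
  -- the subgroup of elements killed by ω
  set A : Subgroup G := (powMonoidHom ω : G →* G).ker with hA
  have hmemA : ∀ g : G, g ∈ A ↔ g ^ ω = 1 := fun g => Iff.rfl
  -- periodic elements are exactly A
  have hiff : ∀ g : G, (∃ m : ℕ, 1 ≤ m ∧ g ^ t ^ m = g) ↔ g ∈ A := by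
    intro g
    constructor
    · rintro ⟨m, hm, hgm⟩
      have htm : 1 ≤ t ^ m := Nat.one_le_pow _ _ ht
      have h1 : g ^ (t ^ m - 1) = 1 := by
        have : g ^ (t ^ m - 1) * g = g := by
          rw [← pow_succ, Nat.sub_add_cancel htm, hgm]
        exact mul_right_cancel (by rw [this, one_mul])
      have hord : orderOf g ∣ t ^ m - 1 := orderOf_dvd_of_pow_eq_one h1
      have hcop : Nat.Coprime (orderOf g) t := by
        have hd1 : Nat.gcd (orderOf g) t ∣ t ^ m - 1 := (Nat.gcd_dvd_left _ _).trans hord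
        have hd2 : Nat.gcd (orderOf g) t ∣ t ^ m := (Nat.gcd_dvd_right _ _).trans (dvd_pow_self t (by omega))
        have : Nat.gcd (orderOf g) t ∣ t ^ m - (t ^ m - 1) := Nat.dvd_sub hd2 hd1
        rwa [Nat.sub_sub_self htm, Nat.dvd_one] at this
      have : orderOf g ∣ ω := hdvdω _ (orderOf_dvd_natCard g) hcop
      exact (hmemA g).mpr (orderOf_dvd_iff_pow_eq_one.mp this)
    · intro hg
      have hord : orderOf g ∣ ω := orderOf_dvd_of_pow_eq_one ((hmemA g).mp hg)
      have hcop : Nat.Coprime t (orderOf g) := (hωcop.coprime_dvd_left hord).symm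
      have hopos : 0 < orderOf g := orderOf_pos g
      refine ⟨Nat.totient (orderOf g), Nat.totient_pos.mpr hopos, ?_⟩
      have hmod : t ^ Nat.totient (orderOf g) ≡ 1 [MOD orderOf g] := Nat.ModEq.pow_totient hcop
      have htm : 1 ≤ t ^ Nat.totient (orderOf g) := Nat.one_le_pow _ _ ht
      have hdvd : orderOf g ∣ t ^ Nat.totient (orderOf g) - 1 :=
        (Nat.modEq_iff_dvd' htm).mp hmod.symm
      have h1 : g ^ (t ^ Nat.totient (orderOf g) - 1) = 1 := orderOf_dvd_iff_pow_eq_one.mp hdvd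
      calc g ^ t ^ Nat.totient (orderOf g)
          = g ^ (t ^ Nat.totient (orderOf g) - 1) * g := by
            rw [← pow_succ, Nat.sub_add_cancel htm]
        _ = g := by rw [h1, one_mul]
  have hcard : Nat.card {g : G // ∃ m : ℕ, 1 ≤ m ∧ g ^ t ^ m = g} = Nat.card A :=
    Nat.card_congr (Equiv.subtypeEquivRight hiff)
  rw [hcard]
  set c := Nat.card A with hc
  have hcdvdn : c ∣ Nat.card G := Subgroup.card_subgroup_dvd_card A
  have hcpos : 0 < c := Nat.card_pos
  -- c is coprime to t
  have hccop : Nat.Coprime c t := by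
    by_contra hcon
    set q := (Nat.gcd c t).minFac with hq
    have hgcdpos : 0 < Nat.gcd c t := Nat.gcd_pos_of_pos_left t hcpos
    have hqprime : q.Prime := Nat.minFac_prime (by omega)
    have hqc : q ∣ c := (Nat.minFac_dvd _).trans (Nat.gcd_dvd_left _ _)
    have hqt : q ∣ t := (Nat.minFac_dvd _).trans (Nat.gcd_dvd_right _ _)
    haveI : Fact q.Prime := ⟨hqprime⟩
    obtain ⟨g, hg⟩ := exists_prime_orderOf_dvd_card' (G := A) q hqc
    have hgG : orderOf (g : G) = q := by rw [Subgroup.orderOf_coe, hg]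
    have hgω : (g : G) ^ ω = 1 := (hmemA _).mp g.2
    have hqω : q ∣ ω := hgG ▸ orderOf_dvd_of_pow_eq_one hgω
    have : q ∣ Nat.gcd ω t := Nat.dvd_gcd hqω hqt
    rw [hωcop] at this
    exact hqprime.one_lt.ne' (Nat.dvd_one.mp this)
  have hcω : c ∣ ω := hdvdω c hcdvdn hccop
  -- ω divides c: via Sylow subgroups
  have hωc : ω ∣ c := by
    rw [← Nat.factorization_le_iff_dvd hωpos.ne' hcpos.ne']
    intro p
    rcases Nat.eq_zero_or_pos (ω.factorization p) with h0 | hppos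
    · simp [h0]
    have hp : p.Prime := Nat.prime_of_mem_primeFactors
      ((Nat.support_factorization ω) ▸ Finsupp.mem_support_iff.mpr hppos.ne')
    have hpω : p ∣ ω := Nat.dvd_of_factorization_pos hppos.ne'
    have hpt : ¬ p ∣ t := fun hd => hp.one_lt.ne'
      (Nat.dvd_one.mp (hωcop ▸ Nat.dvd_gcd hpω hd))
    -- Sylow p-subgroup
    haveI : Fact p.Prime := ⟨hp⟩
    obtain ⟨P⟩ : Nonempty (Sylow p G) := inferInstance
    have hPcard : Nat.card P = p ^ (Nat.card G).factorization p := P.card_eq_multiplicity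
    -- P ≤ A
    have hPA : (P : Subgroup G) ≤ A := by
      intro g hg
      have hord : orderOf g ∣ p ^ (Nat.card G).factorization p := by
        rw [← hPcard, ← Subgroup.orderOf_mk g hg]
        exact orderOf_dvd_natCard _
      have hcop' : Nat.Coprime (orderOf g) t := by
        rcases (Nat.dvd_prime_pow hp).mp hord with ⟨k, _, hk⟩
        exact hk ▸ Nat.Coprime.pow_left _ ((Nat.Prime.coprime_iff_not_dvd hp).mpr hpt)
      have : orderOf g ∣ ω := hdvdω _ (orderOf_dvd_natCard g) hcop'
      exact (hmemA g).mpr (orderOf_dvd_iff_pow_eq_one.mp this)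
    have hPc : p ^ (Nat.card G).factorization p ∣ c := hPcard ▸ Subgroup.card_dvd_of_le hPA
    have h1 : (Nat.card G).factorization p ≤ c.factorization p :=
      ((hp.pow_dvd_iff_le_factorization hcpos.ne').mp hPc)
    have h2 : ω.factorization p ≤ (Nat.card G).factorization p :=
      (Nat.factorization_le_iff_dvd hωpos.ne' hnpos.ne').mpr hωdvd p
    omega
  exact Nat.dvd_antisymm hcω hωc
end

section
/- Let t be a positive integer, G a finite group with identity 1, and write |G| = ν·ω where ω is the greatest divisor of |G| that is relatively prime to t. Let G[ν] denote the subgroup of G generated by all elements g with g^ν = 1. Suppose h ∈ G is φ_t-periodic, let s ≥ 1 be the least positive integer with h^(t^s) = h, and suppose h commutes with every element of G[ν]. Define τ(g) = g·h^(t^(δ(g)·(s−1))). Then τ is a bijection from the set A = { g ∈ G : φ_t^(δ(g))(g) = 1 } onto the set B = { g ∈ G : φ_t^(δ(g))(g) = h }, it satisfies δ(τ(g)) = δ(g) for all g ∈ A, and τ(g^t) = τ(g)^t for all g ∈ A with δ(g) ≥ 1. -/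
/-- With |G| = ν·ω (ω the greatest divisor of |G| coprime to t),
G[ν] the subgroup generated by elements g with g^ν = 1, h a φ_t-periodic element
commuting with all of G[ν], s the least positive integer with h^(t^s) = h, and δ the
preperiod function, the map τ(g) = g·h^(t^(δ(g)(s-1))) is a bijection from
A = {g : φ_t^(δ(g))(g) = 1} onto B = {g : φ_t^(δ(g))(g) = h}, preserves δ, and
satisfies τ(g^t) = τ(g)^t whenever δ(g) ≥ 1. -/
theorem stmt5 (t : ℕ) (ht : 0 < t) (G : Type*) [Group G] [Finite G]
    (ν ω : ℕ) (hfac : Nat.card G = ν * ω) (hωdvd : ω ∣ Nat.card G)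
    (hωcop : Nat.Coprime ω t)
    (hωmax : ∀ d : ℕ, d ∣ Nat.card G → Nat.Coprime d t → d ≤ ω)
    (h : G) (hper : ∃ m : ℕ, 1 ≤ m ∧ h ^ t ^ m = h)
    (s : ℕ) (hs1 : 1 ≤ s) (hsper : h ^ t ^ s = h)
    (hsmin : ∀ m : ℕ, 1 ≤ m → h ^ t ^ m = h → s ≤ m)
    (hcomm : ∀ g ∈ Subgroup.closure {g : G | g ^ ν = 1}, Commute h g)
    (δ : G → ℕ)
    (hδper : ∀ g : G, ∃ m : ℕ, 1 ≤ m ∧ (g ^ t ^ δ g) ^ t ^ m = g ^ t ^ δ g)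
    (hδmin : ∀ g : G, ∀ i : ℕ, (∃ m : ℕ, 1 ≤ m ∧ (g ^ t ^ i) ^ t ^ m = g ^ t ^ i) → δ g ≤ i)
    (τ : G → G) (hτ : ∀ g : G, τ g = g * h ^ t ^ (δ g * (s - 1)))
    (A B : Set G) (hA : A = {g : G | g ^ t ^ δ g = 1}) (hB : B = {g : G | g ^ t ^ δ g = h}) :
    Set.BijOn τ A B ∧ (∀ g ∈ A, δ (τ g) = δ g) ∧
      (∀ g ∈ A, 1 ≤ δ g → τ (g ^ t) = τ g ^ t) := by
  subst hA hB
  -- iterated periodicity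
  have hiter : ∀ (x : G) (a : ℕ), x ^ t ^ a = x → ∀ k : ℕ, x ^ t ^ (a * k) = x := by
    intro x a hx k
    induction k with
    | zero => simp
    | succ k ih =>
      have h1 : a * (k + 1) = a * k + a := Nat.mul_succ a k
      rw [h1, pow_add, pow_mul, ih, hx]
  have Ph : ∃ m, 1 ≤ m ∧ h ^ t ^ m = h := ⟨s, hs1, hsper⟩
  have hshift : ∀ a : ℕ, h ^ t ^ (a + s) = h ^ t ^ a := by
    intro a
    rw [pow_add, mul_comm, pow_mul, hsper]
  have hks : ∀ k : ℕ, h ^ t ^ (k * s) = h := by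
    intro k; rw [mul_comm]; exact hiter h s hsper k
  have Ppow : ∀ (x : G) (n : ℕ), (∃ m, 1 ≤ m ∧ x ^ t ^ m = x) →
      ∃ m, 1 ≤ m ∧ (x ^ n) ^ t ^ m = x ^ n := by
    rintro x n ⟨m, hm, hx⟩
    exact ⟨m, hm, by rw [← pow_mul, mul_comm, pow_mul, hx]⟩
  have Pinv : ∀ (x : G), (∃ m, 1 ≤ m ∧ x ^ t ^ m = x) →
      ∃ m, 1 ≤ m ∧ (x⁻¹) ^ t ^ m = x⁻¹ := by
    rintro x ⟨m, hm, hx⟩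
    exact ⟨m, hm, by rw [inv_pow, hx]⟩
  have Pmul : ∀ (x y : G), Commute x y → (∃ m, 1 ≤ m ∧ x ^ t ^ m = x) →
      (∃ m, 1 ≤ m ∧ y ^ t ^ m = y) → ∃ m, 1 ≤ m ∧ (x * y) ^ t ^ m = x * y := by
    rintro x y hc ⟨a, ha, hx⟩ ⟨b, hb, hy⟩
    refine ⟨a * b, Nat.mul_pos ha hb, ?_⟩
    have hx' : x ^ t ^ (a * b) = x := hiter x a hx b
    have hy' : y ^ t ^ (a * b) = y := by rw [mul_comm]; exact hiter y b hy a
    rw [hc.mul_pow, hx', hy']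
  -- expansion of powers of x * h^e
  have hexp : ∀ (x : G) (e i : ℕ), Commute h x →
      (x * h ^ e) ^ t ^ i = x ^ t ^ i * h ^ (e * t ^ i) := by
    intro x e i hc
    rw [(hc.symm.pow_right e).mul_pow, ← pow_mul]
  have hcom2 : ∀ (x : G) (e : ℕ), Commute h x → Commute h (x * h ^ e) := by
    intro x e hc
    exact hc.mul_right (Commute.pow_right (Commute.refl h) e)
  -- periodicity transfer
  have hPiff : ∀ (x : G) (e i : ℕ), Commute h x →
      ((∃ m, 1 ≤ m ∧ (x ^ t ^ i) ^ t ^ m = x ^ t ^ i) ↔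
       (∃ m, 1 ≤ m ∧ ((x * h ^ e) ^ t ^ i) ^ t ^ m = (x * h ^ e) ^ t ^ i)) := by
    intro x e i hc
    have Phe : ∃ m, 1 ≤ m ∧ (h ^ (e * t ^ i)) ^ t ^ m = h ^ (e * t ^ i) := Ppow h _ Ph
    constructor
    · intro hx
      rw [hexp x e i hc]
      exact Pmul _ _ (hc.symm.pow_pow _ _) hx Phe
    · intro hxy
      have hx : x ^ t ^ i = (x * h ^ e) ^ t ^ i * (h ^ (e * t ^ i))⁻¹ := by
        rw [hexp x e i hc, mul_assoc, mul_inv_cancel, mul_one]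
      rw [hx]
      exact Pmul _ _ (((hcom2 x e hc).symm.pow_pow _ _).inv_right) hxy (Pinv _ Phe)
  -- δ invariance under multiplication by powers of h
  have hδτ : ∀ (x : G) (e : ℕ), Commute h x → δ (x * h ^ e) = δ x := by
    intro x e hc
    apply le_antisymm
    · exact hδmin _ _ ((hPiff x e (δ x) hc).mp (hδper x))
    · exact hδmin _ _ ((hPiff x e (δ (x * h ^ e)) hc).mpr (hδper _))
  -- elements of A commute with h
  have hAh : ∀ g : G, g ^ t ^ δ g = 1 → Commute h g := by
    intro g hg
    apply hcomm
    apply Subgroup.subset_closure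
    show g ^ ν = 1
    have h1 : orderOf g ∣ t ^ δ g := orderOf_dvd_of_pow_eq_one hg
    have h2 : orderOf g ∣ ν * ω := hfac ▸ orderOf_dvd_natCard g
    have h3 : Nat.Coprime (orderOf g) ω :=
      ((hωcop.pow_right (δ g)).coprime_dvd_right h1).symm
    exact orderOf_dvd_iff_pow_eq_one.mp (h3.dvd_of_dvd_mul_right h2)
  have harith : ∀ k : ℕ, k * (s - 1) + k = k * s := by
    intro k
    have hss : s - 1 + 1 = s := Nat.sub_add_cancel hs1
    calc k * (s - 1) + k = k * ((s - 1) + 1) := (Nat.mul_succ _ _).symm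
      _ = k * s := by rw [hss]
  -- main mapping fact
  have hmaps : ∀ g : G, g ^ t ^ δ g = 1 → δ (τ g) = δ g ∧ (τ g) ^ t ^ δ (τ g) = h := by
    intro g hg
    have hc := hAh g hg
    have hδ' : δ (τ g) = δ g := by rw [hτ g]; exact hδτ g _ hc
    refine ⟨hδ', ?_⟩
    rw [hδ', hτ g, hexp g _ _ hc, hg, one_mul, ← pow_add, harith]
    exact hks _
  have hpow_t : ∀ (x : G) (i : ℕ), (x ^ t) ^ t ^ i = x ^ t ^ (i + 1) := by
    intro x i
    rw [← pow_mul, ← pow_succ']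
  refine ⟨⟨?_, ?_, ?_⟩, ?_, ?_⟩
  · -- MapsTo
    intro g hg
    simp only [Set.mem_setOf_eq] at hg ⊢
    exact (hmaps g hg).2
  · -- InjOn
    intro g1 hg1 g2 hg2 heq
    simp only [Set.mem_setOf_eq] at hg1 hg2
    have e1 := (hmaps g1 hg1).1
    have e2 := (hmaps g2 hg2).1
    have hδeq : δ g1 = δ g2 := by rw [← e1, ← e2, heq]
    rw [hτ g1, hτ g2, hδeq] at heq
    exact mul_right_cancel heq
  · -- SurjOn
    intro b hb
    simp only [Set.mem_setOf_eq] at hb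
    have hcb : Commute h b := by
      rw [← hb]; exact Commute.pow_left (Commute.refl b) _
    have hcg : Commute h (b * (h ^ t ^ (δ b * (s - 1)))⁻¹) :=
      hcb.mul_right ((Commute.pow_right (Commute.refl h) _).inv_right)
    have hgb : b * (h ^ t ^ (δ b * (s - 1)))⁻¹ * h ^ t ^ (δ b * (s - 1)) = b := by
      rw [mul_assoc, inv_mul_cancel, mul_one]
    have hδg : δ (b * (h ^ t ^ (δ b * (s - 1)))⁻¹) = δ b := by
      have h1 := hδτ (b * (h ^ t ^ (δ b * (s - 1)))⁻¹) (t ^ (δ b * (s - 1))) hcg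
      rw [hgb] at h1
      exact h1.symm
    have hmem : (b * (h ^ t ^ (δ b * (s - 1)))⁻¹) ^
        t ^ δ (b * (h ^ t ^ (δ b * (s - 1)))⁻¹) = 1 := by
      rw [hδg, ((hcb.symm.pow_right _).inv_right).mul_pow, hb, inv_pow, ← pow_mul,
        ← pow_add, harith, hks, mul_inv_cancel]
    refine ⟨b * (h ^ t ^ (δ b * (s - 1)))⁻¹, hmem, ?_⟩
    rw [hτ, hδg, hgb]
  · -- δ preservation
    intro g hg
    simp only [Set.mem_setOf_eq] at hg
    exact (hmaps g hg).1
  · -- compatibility with φ_t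
    intro g hg hδ1
    simp only [Set.mem_setOf_eq] at hg
    have hc := hAh g hg
    have hδgt : δ (g ^ t) = δ g - 1 := by
      apply le_antisymm
      · apply hδmin
        rw [hpow_t, Nat.sub_add_cancel hδ1, hg]
        exact ⟨1, le_refl 1, one_pow _⟩
      · have h1 : δ g ≤ δ (g ^ t) + 1 := by
          apply hδmin
          rw [← hpow_t]
          exact hδper (g ^ t)
        omega
    have harith2 : δ g * (s - 1) + 1 = (δ g - 1) * (s - 1) + s := by
      obtain ⟨k', hk'⟩ : ∃ k', δ g = k' + 1 := ⟨δ g - 1, (Nat.sub_add_cancel hδ1).symm⟩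
      obtain ⟨s', hs'⟩ : ∃ s', s = s' + 1 := ⟨s - 1, (Nat.sub_add_cancel hs1).symm⟩
      rw [hk', hs']
      simp only [Nat.add_sub_cancel]
      ring
    have hh : h ^ t ^ (δ g * (s - 1) + 1) = h ^ t ^ ((δ g - 1) * (s - 1)) := by
      rw [harith2]; exact hshift _
    rw [hτ g, hτ (g ^ t), hδgt, (hc.symm.pow_right _).mul_pow, ← pow_mul, ← pow_succ, hh]
end

section
/- Let G be a finite noncyclic group and C₀ a cyclic subgroup of G. Then G is a flower group with pistil C₀ if and only if for every g ∈ G \ C₀ there exists a unique μ-subgroup C of G with g ∈ C, and this C contains C₀. -/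
/-- A cyclic subgroup `C` of `G` is a μ-subgroup if it is not contained in any cyclic
subgroup of `G` other than `C` itself. -/
def IsMuSubgroup {G : Type*} [Group G] (C : Subgroup G) : Prop :=
  IsCyclic ↥C ∧ ∀ K : Subgroup G, IsCyclic ↥K → C ≤ K → C = K

/-- A noncyclic group `G` is a flower group with pistil `C0` if any two distinct
μ-subgroups of `G` intersect exactly in `C0`. -/
def IsFlowerGroup {G : Type*} [Group G] (C0 : Subgroup G) : Prop :=
  ¬ IsCyclic G ∧
    ∀ C C' : Subgroup G, IsMuSubgroup C → IsMuSubgroup C' → C ≠ C' → C ⊓ C' = C0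

/-
In a finite group the μ-subgroups are the maximal cyclic subgroups, so every element lies in
one, and a noncyclic group has at least two of them. Hence in a flower group every μ-subgroup
meets another one in `C0`, so contains it, and an element outside `C0` cannot lie in two
distinct μ-subgroups. Conversely, if every element outside `C0` lies in a unique μ-subgroup,
two distinct μ-subgroups meet inside `C0`; and each μ-subgroup contains `C0`, either through
one of its elements outside `C0` or, if it lies inside the cyclic group `C0`, by maximality.
-/

section

variable {G : Type*} [Group G]

theorem isMuSubgroup_iff_maximal {C : Subgroup G} :
    IsMuSubgroup C ↔ Maximal (fun K : Subgroup G ↦ IsCyclic K) C :=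
  ⟨fun ⟨hC, hmax⟩ ↦ ⟨hC, fun _ hK hCK ↦ (hmax _ hK hCK).ge⟩,
    fun ⟨hC, hmax⟩ ↦ ⟨hC, fun _ hK hCK ↦ le_antisymm hCK (hmax hK hCK)⟩⟩

theorem IsMuSubgroup.le_of_forall_notMem {C0 C : Subgroup G} (hc0 : IsCyclic C0)
    (h : ∀ g ∉ C0, ∀ D : Subgroup G, IsMuSubgroup D → g ∈ D → C0 ≤ D) (hC : IsMuSubgroup C) :
    C0 ≤ C := by
  by_cases hCC0 : C ≤ C0
  · exact (hC.2 C0 hc0 hCC0).ge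
  · obtain ⟨g, hgC, hgC0⟩ := SetLike.not_le_iff_exists.mp hCC0
    exact h g hgC0 C hC hgC

theorem IsMuSubgroup.ne_top (hnc : ¬ IsCyclic G) {C : Subgroup G} (hC : IsMuSubgroup C) :
    C ≠ ⊤ := by
  rintro rfl
  exact hnc (Subgroup.topEquiv.isCyclic.mp hC.1)

variable [Finite G]

theorem exists_isMuSubgroup_mem (g : G) : ∃ C : Subgroup G, IsMuSubgroup C ∧ g ∈ C := by
  obtain ⟨C, hgC, hC⟩ :=
    Finite.exists_le_maximal (p := fun K : Subgroup G ↦ IsCyclic K) (Subgroup.isCyclic_zpowers g)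
  exact ⟨C, isMuSubgroup_iff_maximal.mpr hC, hgC (Subgroup.mem_zpowers g)⟩

theorem exists_isMuSubgroup_ne (hnc : ¬ IsCyclic G) {C : Subgroup G} (hC : IsMuSubgroup C) :
    ∃ C' : Subgroup G, IsMuSubgroup C' ∧ C' ≠ C := by
  obtain ⟨g, hg⟩ := SetLike.exists_not_mem_of_ne_top C (hC.ne_top hnc)
  obtain ⟨C', hC', hgC'⟩ := exists_isMuSubgroup_mem g
  exact ⟨C', hC', fun h ↦ hg (h ▸ hgC')⟩

theorem IsFlowerGroup.le_of_isMuSubgroup {C0 C : Subgroup G} (hF : IsFlowerGroup C0)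
    (hC : IsMuSubgroup C) : C0 ≤ C := by
  obtain ⟨C', hC', hne⟩ := exists_isMuSubgroup_ne hF.1 hC
  rw [← hF.2 C C' hC hC' hne.symm]
  exact inf_le_left

theorem IsFlowerGroup.existsUnique_isMuSubgroup_mem {C0 : Subgroup G} (hF : IsFlowerGroup C0)
    {g : G} (hg : g ∉ C0) : ∃! C : Subgroup G, IsMuSubgroup C ∧ g ∈ C := by
  obtain ⟨C, hC, hgC⟩ := exists_isMuSubgroup_mem g
  refine ⟨C, ⟨hC, hgC⟩, fun C' ⟨hC', hgC'⟩ ↦ ?_⟩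
  by_contra hne
  exact hg (hF.2 C' C hC' hC hne ▸ Subgroup.mem_inf.mpr ⟨hgC', hgC⟩)

end

/-- G is a flower group with pistil C₀ iff every g ∉ C₀ lies in a unique
μ-subgroup C of G, and this C contains C₀. -/
theorem stmt6 {G : Type*} [Group G] [Finite G] (C0 : Subgroup G)
    (hnc : ¬ IsCyclic G) (hc0 : IsCyclic ↥C0) :
    IsFlowerGroup C0 ↔
      ∀ g : G, g ∉ C0 →
        (∃! C : Subgroup G, IsMuSubgroup C ∧ g ∈ C) ∧
        (∀ C : Subgroup G, IsMuSubgroup C → g ∈ C → C0 ≤ C) := by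
  refine ⟨fun hF g hg ↦ ⟨hF.existsUnique_isMuSubgroup_mem hg,
    fun C hC _ ↦ hF.le_of_isMuSubgroup hC⟩, fun h ↦ ⟨hnc, fun C C' hC hC' hne ↦ ?_⟩⟩
  have hC0_le {D : Subgroup G} (hD : IsMuSubgroup D) : C0 ≤ D :=
    hD.le_of_forall_notMem hc0 (fun g hg ↦ (h g hg).2)
  refine le_antisymm (fun x hx ↦ ?_) (le_inf (hC0_le hC) (hC0_le hC'))
  by_contra hxC0
  exact hne ((h x hxC0).1.unique ⟨hC, hx.1⟩ ⟨hC', hx.2⟩)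
end

section
/- For n ≥ 2, the generalized quaternion group Q_{4n} = ⟨a, b | a^{2n} = 1, b² = a^n, b·a·b⁻¹ = a⁻¹⟩ of order 4n is a flower group with pistil C₀ = {1, a^n}. Moreover, its set of petals consists of exactly n cyclic subgroups of order 4 (namely ⟨a^i b⟩ for 1 ≤ i ≤ n) and one cyclic subgroup of order 2n (namely ⟨a⟩). -/
/-!
Every cyclic subgroup of `Q_{4n}` is either contained in `⟨a 1⟩` or equal to
`⟨xa j⟩ = {1, a n, xa j, xa (j + n)}`, where `xa (j + n) = (xa j)⁻¹`. So each `⟨xa j⟩` is maximal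
among cyclic subgroups, and so is `⟨a 1⟩` once `n ≥ 2`, because then `a 1 ∉ {1, a n}`. An element
`xa j` of a petal generates it, so distinct petals meet exactly in `⟨a n⟩ = {1, a n}`; and
`⟨xa j⟩ = ⟨xa k⟩` iff `j = k` or `j = k + n` in `ZMod (2n)`, which leaves the `n` petals
`⟨xa i⟩`, `1 ≤ i ≤ n`.
-/

open Subgroup

section

variable {G : Type*} [Group G]

theorem IsMuSubgroup.exists_eq_zpowers {C : Subgroup G} (hC : IsMuSubgroup C) :
    ∃ g : G, C = zpowers g :=
  (C.isCyclic_iff_exists_zpowers_eq_top.1 hC.1).imp fun _ h => h.symm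

theorem isMuSubgroup_zpowers_iff {g : G} :
    IsMuSubgroup (zpowers g) ↔ ∀ h : G, g ∈ zpowers h → zpowers g = zpowers h := by
  refine ⟨fun hg h hgh => hg.2 _ inferInstance (zpowers_le.2 hgh),
    fun hg => ⟨inferInstance, fun K hK hgK => ?_⟩⟩
  obtain ⟨h, rfl⟩ := K.isCyclic_iff_exists_zpowers_eq_top.1 hK
  exact hg h (zpowers_le.1 hgK)

theorem mem_zpowers_iff_of_sq_eq_one {g x : G} (hg : g ^ 2 = 1) :
    x ∈ zpowers g ↔ x = 1 ∨ x = g := by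
  refine ⟨fun hx => ?_, by rintro (rfl | rfl) <;> simp [one_mem, mem_zpowers]⟩
  obtain ⟨k, rfl⟩ := mem_zpowers_iff.1 hx
  obtain ⟨m, rfl | rfl⟩ := Int.even_or_odd' k
  · exact .inl (by rw [zpow_mul, zpow_ofNat, hg, one_zpow])
  · exact .inr (by rw [zpow_add_one, zpow_mul, zpow_ofNat, hg, one_zpow, one_mul])

end

namespace ZMod

theorem natCast_eq_natCast_iff_of_lt {m p q : ℕ} (hp : p < m) (hq : q < m) :
    (p : ZMod m) = q ↔ p = q := by
  rw [natCast_eq_natCast_iff', Nat.mod_eq_of_lt hp, Nat.mod_eq_of_lt hq]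

theorem natCast_add_natCast_self (n : ℕ) : (n : ZMod (2 * n)) + n = 0 := by
  rw [← Nat.cast_add, ← two_mul, natCast_self]

theorem natCast_ne_natCast_add_self {n p q : ℕ} (hp : 0 < p) (hpn : p ≤ n) (hq : 0 < q)
    (hqn : q ≤ n) : (p : ZMod (2 * n)) ≠ q + n := by
  intro h
  have hdvd := (intCast_eq_intCast_iff_dvd_sub p (q + n) (2 * n)).1 (by push_cast; exact h)
  have := Int.eq_zero_of_dvd_of_nonneg_of_lt (by omega) (by push_cast; omega) hdvd
  omega

theorem exists_eq_natCast_succ_or_eq_add {n : ℕ} [NeZero n] (j : ZMod (2 * n)) :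
    ∃ i : Fin n, j = ((i + 1 : ℕ) : ZMod (2 * n)) ∨ j = ((i + 1 : ℕ) : ZMod (2 * n)) + n := by
  have hn := Nat.pos_of_neZero n
  have hj := val_lt j
  rw [← natCast_zmod_val j]
  generalize j.val = m at hj ⊢
  obtain rfl | hm | hm : m = 0 ∨ (0 < m ∧ m ≤ n) ∨ n < m := by omega
  · refine ⟨⟨n - 1, by omega⟩, .inr ?_⟩
    rw [Nat.sub_add_cancel hn, natCast_add_natCast_self, Nat.cast_zero]
  · exact ⟨⟨m - 1, by omega⟩, .inl (by congr 1; dsimp only; omega)⟩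
  · refine ⟨⟨m - n - 1, by omega⟩, .inr ?_⟩
    rw [← Nat.cast_add]
    congr 1
    dsimp only
    omega

end ZMod

namespace QuaternionGroup

variable {n : ℕ}

theorem inv_xa (j : ZMod (2 * n)) : (xa j)⁻¹ = xa (j + n : ZMod (2 * n)) :=
  congrArg xa (add_comm _ _)

theorem zpowers_xa_add_natCast (j : ZMod (2 * n)) :
    zpowers (xa (j + n : ZMod (2 * n))) = zpowers (xa j) := by
  rw [← inv_xa, zpowers_inv]

theorem mem_zpowers_a_natCast_iff {g : QuaternionGroup n} :
    g ∈ zpowers (a n) ↔ g = 1 ∨ g = a n :=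
  mem_zpowers_iff_of_sq_eq_one (by rw [sq, a_mul_a, ZMod.natCast_add_natCast_self, a_zero])

theorem zpowers_a_natCast_le_zpowers_xa (j : ZMod (2 * n)) : zpowers (a n) ≤ zpowers (xa j) :=
  zpowers_le.2 (xa_sq j ▸ pow_mem (mem_zpowers _) 2)

theorem mem_zpowers_xa_iff [NeZero n] {j : ZMod (2 * n)} {g : QuaternionGroup n} :
    g ∈ zpowers (xa j) ↔ g ∈ zpowers (a n) ∨ g = xa j ∨ g = xa (j + n : ZMod (2 * n)) := by
  classical
  refine ⟨fun hg => ?_, fun hg => ?_⟩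
  · obtain ⟨m, hm, rfl⟩ := Finset.mem_image.1 (mem_zpowers_iff_mem_range_orderOf.1 hg)
    rw [orderOf_xa, Finset.mem_range] at hm
    have hcube : xa j ^ 3 = (xa j)⁻¹ :=
      eq_inv_of_mul_eq_one_left (by rw [← pow_succ, xa_pow_four])
    interval_cases m
    · exact .inl (by rw [pow_zero]; exact one_mem _)
    · exact .inr (.inl (pow_one _))
    · exact .inl (by rw [xa_sq]; exact mem_zpowers _)
    · exact .inr (.inr (by rw [hcube, inv_xa]))
  · rcases hg with hg | rfl | rfl
    · exact zpowers_a_natCast_le_zpowers_xa j hg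
    · exact mem_zpowers _
    · exact inv_xa j ▸ inv_mem (mem_zpowers _)

theorem mem_zpowers_a_one_iff [NeZero n] {g : QuaternionGroup n} :
    g ∈ zpowers (a 1) ↔ ∃ i, g = a i := by
  refine ⟨fun hg => ?_, ?_⟩
  · obtain ⟨m, rfl⟩ := mem_powers_iff_mem_zpowers.2 hg
    exact ⟨m, a_one_pow m⟩
  · rintro ⟨i, rfl⟩
    rw [← ZMod.natCast_zmod_val i, ← a_one_pow]
    exact pow_mem (mem_zpowers _) _

theorem zpowers_a_le_zpowers_a_one [NeZero n] (i : ZMod (2 * n)) :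
    zpowers (a i) ≤ zpowers (a 1) :=
  zpowers_le.2 (mem_zpowers_a_one_iff.2 ⟨i, rfl⟩)

theorem xa_notMem_zpowers_a [NeZero n] (i j : ZMod (2 * n)) : xa j ∉ zpowers (a i) := by
  intro h
  obtain ⟨k, hk⟩ := mem_zpowers_a_one_iff.1 (zpowers_a_le_zpowers_a_one i h)
  cases hk

theorem xa_mem_zpowers_xa_iff [NeZero n] {j k : ZMod (2 * n)} :
    xa j ∈ zpowers (xa k) ↔ j = k ∨ j = k + n := by
  rw [mem_zpowers_xa_iff, xa.injEq, xa.injEq]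
  exact or_iff_right (xa_notMem_zpowers_a _ j)

theorem zpowers_xa_eq_zpowers_xa_iff [NeZero n] {j k : ZMod (2 * n)} :
    zpowers (xa j) = zpowers (xa k) ↔ j = k ∨ j = k + n := by
  refine ⟨fun h => xa_mem_zpowers_xa_iff.1 (h ▸ mem_zpowers _), ?_⟩
  rintro (rfl | rfl)
  exacts [rfl, zpowers_xa_add_natCast k]

theorem a_one_notMem_zpowers_xa (hn : 2 ≤ n) (j : ZMod (2 * n)) : a 1 ∉ zpowers (xa j) := by
  have : NeZero n := ⟨by omega⟩
  rw [mem_zpowers_xa_iff, mem_zpowers_a_natCast_iff, one_def]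
  simp only [a.injEq, reduceCtorEq, or_false]
  have hcast : ∀ q < 2 * n, ((1 : ℕ) : ZMod (2 * n)) = q → q = 1 := fun q hq h =>
    ((ZMod.natCast_eq_natCast_iff_of_lt (by omega) hq).1 h).symm
  rintro (h | h)
  · exact absurd (hcast 0 (by omega) (by exact_mod_cast h)) (by omega)
  · exact absurd (hcast n (by omega) (by exact_mod_cast h)) (by omega)

theorem isMuSubgroup_zpowers_xa [NeZero n] (j : ZMod (2 * n)) : IsMuSubgroup (zpowers (xa j)) :=
  isMuSubgroup_zpowers_iff.2 fun
    | a i, h => absurd h (xa_notMem_zpowers_a i j)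
    | xa _, h => zpowers_xa_eq_zpowers_xa_iff.2 (xa_mem_zpowers_xa_iff.1 h)

theorem isMuSubgroup_zpowers_a_one (hn : 2 ≤ n) :
    IsMuSubgroup (zpowers (a 1 : QuaternionGroup n)) := by
  have : NeZero n := ⟨by omega⟩
  exact isMuSubgroup_zpowers_iff.2 fun
    | a i, h => le_antisymm (zpowers_le.2 h) (zpowers_a_le_zpowers_a_one i)
    | xa j, h => absurd h (a_one_notMem_zpowers_xa hn j)

theorem exists_fin_zpowers_xa_eq [NeZero n] (j : ZMod (2 * n)) :
    ∃ i : Fin n, zpowers (xa j) = zpowers (xa ((i + 1 : ℕ) : ZMod (2 * n))) := by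
  obtain ⟨i, rfl | rfl⟩ := ZMod.exists_eq_natCast_succ_or_eq_add j
  exacts [⟨i, rfl⟩, ⟨i, zpowers_xa_add_natCast _⟩]

theorem isMuSubgroup_iff (hn : 2 ≤ n) {C : Subgroup (QuaternionGroup n)} :
    IsMuSubgroup C ↔
      C = zpowers (a 1) ∨ ∃ i : Fin n, C = zpowers (xa ((i + 1 : ℕ) : ZMod (2 * n))) := by
  have : NeZero n := ⟨by omega⟩
  refine ⟨fun hC => ?_, ?_⟩
  · obtain ⟨g, rfl⟩ := hC.exists_eq_zpowers
    cases g with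
    | a i => exact .inl (isMuSubgroup_zpowers_iff.1 hC _ (mem_zpowers_a_one_iff.2 ⟨i, rfl⟩))
    | xa j => exact .inr (exists_fin_zpowers_xa_eq j)
  · rintro (rfl | ⟨i, rfl⟩)
    exacts [isMuSubgroup_zpowers_a_one hn, isMuSubgroup_zpowers_xa _]

theorem zpowers_a_one_inf_zpowers_xa [NeZero n] (j : ZMod (2 * n)) :
    zpowers (a 1) ⊓ zpowers (xa j) = zpowers (a n) := by
  refine le_antisymm (fun g ⟨h1, hj⟩ => ?_)
    (le_inf (zpowers_a_le_zpowers_a_one _) (zpowers_a_natCast_le_zpowers_xa j))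
  rcases mem_zpowers_xa_iff.1 hj with hg | rfl | rfl
  exacts [hg, absurd h1 (xa_notMem_zpowers_a 1 _), absurd h1 (xa_notMem_zpowers_a 1 _)]

theorem zpowers_xa_inf_zpowers_xa [NeZero n] {j k : ZMod (2 * n)}
    (hne : zpowers (xa j) ≠ zpowers (xa k)) : zpowers (xa j) ⊓ zpowers (xa k) = zpowers (a n) := by
  refine le_antisymm (fun g ⟨hj, hk⟩ => ?_) (le_inf (zpowers_a_natCast_le_zpowers_xa j)
    (zpowers_a_natCast_le_zpowers_xa k))
  rcases mem_zpowers_xa_iff.1 hj with hg | rfl | rfl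
  · exact hg
  · exact absurd (zpowers_xa_eq_zpowers_xa_iff.2 (xa_mem_zpowers_xa_iff.1 hk)) hne
  · rw [← zpowers_xa_add_natCast] at hne
    exact absurd (zpowers_xa_eq_zpowers_xa_iff.2 (xa_mem_zpowers_xa_iff.1 hk)) hne

theorem inf_eq_zpowers_a_natCast (hn : 2 ≤ n) {C C' : Subgroup (QuaternionGroup n)}
    (hC : IsMuSubgroup C) (hC' : IsMuSubgroup C') (hne : C ≠ C') : C ⊓ C' = zpowers (a n) := by
  have : NeZero n := ⟨by omega⟩
  rcases (isMuSubgroup_iff hn).1 hC with rfl | ⟨i, rfl⟩ <;>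
    rcases (isMuSubgroup_iff hn).1 hC' with rfl | ⟨i', rfl⟩
  · exact absurd rfl hne
  · exact zpowers_a_one_inf_zpowers_xa _
  · exact inf_comm (zpowers (a 1)) _ ▸ zpowers_a_one_inf_zpowers_xa _
  · exact zpowers_xa_inf_zpowers_xa hne

theorem not_isCyclic (hn : 2 ≤ n) : ¬ IsCyclic (QuaternionGroup n) := by
  intro h
  have hcomm := mul_comm' (a 1 : QuaternionGroup n) (xa 0)
  rw [a_mul_xa, xa_mul_a, xa.injEq, zero_sub, zero_add, neg_eq_iff_add_eq_zero,
    one_add_one_eq_two] at hcomm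
  have := Nat.le_of_dvd two_pos ((ZMod.natCast_eq_zero_iff 2 (2 * n)).1 (by exact_mod_cast hcomm))
  omega

theorem isFlowerGroup (hn : 2 ≤ n) : IsFlowerGroup (zpowers (a n : QuaternionGroup n)) :=
  ⟨not_isCyclic hn, fun _ _ => inf_eq_zpowers_a_natCast hn⟩

theorem injective_zpowers_xa_natCast_succ [NeZero n] :
    Function.Injective fun i : Fin n => zpowers (xa ((i + 1 : ℕ) : ZMod (2 * n))) := by
  intro i i' h
  rcases zpowers_xa_eq_zpowers_xa_iff.1 h with h | h
  · exact Fin.ext (by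
      have := (ZMod.natCast_eq_natCast_iff_of_lt (by omega) (by omega)).1 h
      omega)
  · exact absurd h (ZMod.natCast_ne_natCast_add_self (by omega) i.isLt (by omega) i'.isLt)

end QuaternionGroup

/-- For n ≥ 2, the generalized quaternion group Q_{4n} is a flower group
with pistil C₀ = {1, a^n}; its petals are the n cyclic subgroups ⟨a^i b⟩ (1 ≤ i ≤ n) of
order 4 together with the cyclic subgroup ⟨a⟩ of order 2n. -/
theorem stmt16 (n : ℕ) (hn : 2 ≤ n) :
    IsFlowerGroup (Subgroup.zpowers (QuaternionGroup.a (n : ZMod (2 * n)))) ∧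
    ((Subgroup.zpowers (QuaternionGroup.a (n : ZMod (2 * n))) : Set (QuaternionGroup n)) =
      {1, QuaternionGroup.a (n : ZMod (2 * n))}) ∧
    (∀ C : Subgroup (QuaternionGroup n), IsMuSubgroup C ↔
      C = Subgroup.zpowers (QuaternionGroup.a (1 : ZMod (2 * n))) ∨
      ∃ i : Fin n, C = Subgroup.zpowers (QuaternionGroup.xa (((i : ℕ) + 1 : ℕ) : ZMod (2 * n)))) ∧
    Nat.card (Subgroup.zpowers (QuaternionGroup.a (1 : ZMod (2 * n)))) = 2 * n ∧
    (∀ i : Fin n,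
      Nat.card (Subgroup.zpowers (QuaternionGroup.xa (((i : ℕ) + 1 : ℕ) : ZMod (2 * n)))) = 4) ∧
    Function.Injective (fun i : Fin n =>
      Subgroup.zpowers (QuaternionGroup.xa (((i : ℕ) + 1 : ℕ) : ZMod (2 * n)))) := by
  have : NeZero n := ⟨by omega⟩
  refine ⟨QuaternionGroup.isFlowerGroup hn, ?_, fun C => QuaternionGroup.isMuSubgroup_iff hn, ?_,
    fun i => ?_, QuaternionGroup.injective_zpowers_xa_natCast_succ⟩
  · ext g
    exact QuaternionGroup.mem_zpowers_a_natCast_iff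
  · rw [Nat.card_zpowers, QuaternionGroup.orderOf_a_one]
  · rw [Nat.card_zpowers, QuaternionGroup.orderOf_xa]
end

section
/- For n ≥ 3, the dihedral group D_{2n} of order 2n is a flower group with pistil the trivial subgroup {1}. Moreover, its set of petals consists of the cyclic rotation subgroup of order n together with exactly n subgroups of order 2, each generated by a reflection. -/
/-!
A cyclic subgroup of `D_{2n}` is generated either by a rotation, and then lies in `⟨r 1⟩`, or by a
reflection `sr i`, and then equals `{1, sr i}`. A reflection lies in no cyclic subgroup other than
its own, while `r 1` lies in no reflection subgroup once `n ≠ 1`; so the μ-subgroups are `⟨r 1⟩`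
and the `⟨sr i⟩`. Two distinct μ-subgroups meet trivially because at least one of them has order
two and its generator is not in the other.
-/

open Subgroup

section Group

variable {G : Type*} [Group G]

theorem IsMuSubgroup.eq_of_le {C C' : Subgroup G} (hC : IsMuSubgroup C) (hC' : IsMuSubgroup C')
    (hle : C ≤ C') : C = C' :=
  hC.2 C' hC'.1 hle

theorem mem_zpowers_iff_of_orderOf_eq_two {g x : G} (hg : orderOf g = 2) :
    x ∈ zpowers g ↔ x = 1 ∨ x = g := by
  classical
  have hfin : IsOfFinOrder g := orderOf_pos_iff.mp (by omega)
  rw [hfin.mem_zpowers_iff_mem_range_orderOf, hg]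
  simp [Nat.le_one_iff_eq_zero_or_eq_one, or_and_right, exists_or, eq_comm]

theorem zpowers_inf_eq_bot_of_orderOf_eq_two {g : G} {H : Subgroup G} (hg : orderOf g = 2)
    (hgH : g ∉ H) : zpowers g ⊓ H = ⊥ := by
  rw [eq_bot_iff]
  rintro x ⟨hxg, hxH⟩
  rcases (mem_zpowers_iff_of_orderOf_eq_two hg).mp hxg with rfl | rfl
  · exact one_mem _
  · exact absurd hxH hgH

end Group

namespace DihedralGroup

variable {n : ℕ}

theorem r_mem_zpowers_r_one (j : ZMod n) : r j ∈ zpowers (r (1 : ZMod n)) :=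
  ⟨(j.cast : ℤ), by show r 1 ^ (j.cast : ℤ) = r j; rw [r_one_zpow, ZMod.intCast_zmod_cast]⟩

theorem zpowers_r_le_zpowers_r_one (j : ZMod n) : zpowers (r j) ≤ zpowers (r (1 : ZMod n)) :=
  zpowers_le.mpr (r_mem_zpowers_r_one j)

theorem sr_ne_one (i : ZMod n) : sr i ≠ 1 :=
  fun h => nomatch h.trans one_def

theorem sr_notMem_zpowers_r (i j : ZMod n) : sr i ∉ zpowers (r j) := by
  rintro ⟨k, hk⟩
  simp [r_zpow] at hk

theorem sr_mem_zpowers_iff {i : ZMod n} {g : DihedralGroup n} :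
    sr i ∈ zpowers g ↔ g = sr i := by
  refine ⟨fun h => ?_, fun h => h ▸ mem_zpowers _⟩
  cases g with
  | r j => exact absurd h (sr_notMem_zpowers_r i j)
  | sr j =>
    rcases (mem_zpowers_iff_of_orderOf_eq_two (orderOf_sr j)).mp h with h | h
    · exact absurd h (sr_ne_one i)
    · exact h.symm

theorem isMuSubgroup_zpowers_sr (i : ZMod n) : IsMuSubgroup (zpowers (sr i)) :=
  isMuSubgroup_zpowers_iff.mpr fun _ h => by rw [sr_mem_zpowers_iff.mp h]

theorem isMuSubgroup_zpowers_r_one (hn : n ≠ 1) : IsMuSubgroup (zpowers (r (1 : ZMod n))) := by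
  have : Nontrivial (ZMod n) := ZMod.nontrivial_iff.mpr hn
  refine isMuSubgroup_zpowers_iff.mpr fun g hg => ?_
  cases g with
  | r j => exact le_antisymm (zpowers_le.mpr hg) (zpowers_r_le_zpowers_r_one j)
  | sr j =>
    rcases (mem_zpowers_iff_of_orderOf_eq_two (orderOf_sr j)).mp hg with h | h
    · exact absurd (r.inj (h.trans one_def)) one_ne_zero
    · exact nomatch h

theorem isMuSubgroup_iff (hn : n ≠ 1) {C : Subgroup (DihedralGroup n)} :
    IsMuSubgroup C ↔ C = zpowers (r (1 : ZMod n)) ∨ ∃ i : ZMod n, C = zpowers (sr i) := by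
  refine ⟨fun hC => ?_, ?_⟩
  · obtain ⟨g, rfl⟩ := (C.isCyclic_iff_exists_zpowers_eq_top).mp hC.1
    cases g with
    | r j => exact .inl (hC.eq_of_le (isMuSubgroup_zpowers_r_one hn) (zpowers_r_le_zpowers_r_one j))
    | sr j => exact .inr ⟨j, rfl⟩
  · rintro (rfl | ⟨i, rfl⟩)
    · exact isMuSubgroup_zpowers_r_one hn
    · exact isMuSubgroup_zpowers_sr i

theorem zpowers_sr_inf_eq_bot {i : ZMod n} {C : Subgroup (DihedralGroup n)} (hC : IsMuSubgroup C)
    (hne : zpowers (sr i) ≠ C) : zpowers (sr i) ⊓ C = ⊥ :=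
  zpowers_inf_eq_bot_of_orderOf_eq_two (orderOf_sr i) fun hi =>
    hne ((isMuSubgroup_zpowers_sr i).eq_of_le hC (zpowers_le.mpr hi))

theorem isFlowerGroup_bot (hn : n ≠ 1) : IsFlowerGroup (⊥ : Subgroup (DihedralGroup n)) := by
  refine ⟨not_isCyclic hn, fun C C' hC hC' hne => ?_⟩
  rcases (isMuSubgroup_iff hn).mp hC with rfl | ⟨_, rfl⟩
  · rcases (isMuSubgroup_iff hn).mp hC' with rfl | ⟨_, rfl⟩
    · exact absurd rfl hne
    · rw [inf_comm]
      exact zpowers_sr_inf_eq_bot hC hne.symm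
  · exact zpowers_sr_inf_eq_bot hC' hne

theorem zpowers_sr_injective : Function.Injective fun i : ZMod n => zpowers (sr i) :=
  fun _ j h => sr.inj (sr_mem_zpowers_iff.mp ((SetLike.ext_iff.mp h (sr j)).mpr (mem_zpowers _)))

end DihedralGroup

open DihedralGroup

/-- For n ≥ 3, the dihedral group D_{2n} is a flower group with pistil the
trivial subgroup; its petals are the rotation subgroup ⟨r⟩ of order n together with the
n subgroups ⟨sr i⟩ of order 2 generated by the reflections. -/
theorem stmt17 (n : ℕ) (hn : 3 ≤ n) :
    IsFlowerGroup (⊥ : Subgroup (DihedralGroup n)) ∧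
    (∀ C : Subgroup (DihedralGroup n), IsMuSubgroup C ↔
      C = Subgroup.zpowers (DihedralGroup.r (1 : ZMod n)) ∨
      ∃ i : ZMod n, C = Subgroup.zpowers (DihedralGroup.sr i)) ∧
    Nat.card (Subgroup.zpowers (DihedralGroup.r (1 : ZMod n))) = n ∧
    (∀ i : ZMod n, Nat.card (Subgroup.zpowers (DihedralGroup.sr i)) = 2) ∧
    (∀ i : ZMod n, orderOf (DihedralGroup.sr i) = 2) ∧
    Function.Injective (fun i : ZMod n => Subgroup.zpowers (DihedralGroup.sr i)) := by
  have hn1 : n ≠ 1 := by omega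
  exact ⟨isFlowerGroup_bot hn1, fun _ => isMuSubgroup_iff hn1,
    by rw [Nat.card_zpowers, orderOf_r_one], fun i => by rw [Nat.card_zpowers, orderOf_sr],
    orderOf_sr, zpowers_sr_injective⟩
end

section
/- Let m, n, s > 1 be integers such that n divides 1 + s + s² + ⋯ + s^{m−1} and gcd(n, 1 + s + ⋯ + s^{j−1}) = 1 for all 1 ≤ j < m. Let G be a group of order mn generated by elements a and b satisfying b^n = 1, a^m = 1, and a·b·a⁻¹ = b^s, where b has order n and a has order m. Then G is a flower group with pistil the trivial subgroup {1}, and its set of petals consists of exactly n cyclic subgroups of order m (namely ⟨b^i a⟩ for 0 ≤ i < n) and one cyclic subgroup of order n (namely ⟨b⟩). -/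
open Subgroup Finset

structure IsCyclicPartition {G : Type*} [Group G] (𝒞 : Set (Subgroup G)) : Prop where
  isCyclic : ∀ C ∈ 𝒞, IsCyclic C
  ne_bot : ∀ C ∈ 𝒞, C ≠ ⊥
  pairwise_inf_eq_bot : 𝒞.Pairwise fun C D => C ⊓ D = ⊥
  exists_mem : ∀ g : G, ∃ C ∈ 𝒞, g ∈ C

namespace IsCyclicPartition

variable {G : Type*} [Group G] {𝒞 : Set (Subgroup G)}

theorem ne_of_inf_eq_bot (h𝒞 : IsCyclicPartition 𝒞) {C D : Subgroup G} (hC : C ∈ 𝒞)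
    (h : C ⊓ D = ⊥) : C ≠ D := fun hCD => h𝒞.ne_bot C hC (by rwa [← hCD, inf_idem] at h)

theorem eq_of_le (h𝒞 : IsCyclicPartition 𝒞) {C D : Subgroup G} (hC : C ∈ 𝒞) (hD : D ∈ 𝒞)
    (hle : C ≤ D) : C = D := by
  by_contra hne
  have h : C ⊓ D = ⊥ := h𝒞.pairwise_inf_eq_bot hC hD hne
  rw [inf_eq_left.mpr hle] at h
  exact h𝒞.ne_bot C hC h

theorem exists_le_of_isCyclic (h𝒞 : IsCyclicPartition 𝒞) {K : Subgroup G} (hK : IsCyclic K) :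
    ∃ D ∈ 𝒞, K ≤ D := by
  obtain ⟨g, rfl⟩ := K.isCyclic_iff_exists_zpowers_eq_top.mp hK
  obtain ⟨D, hD, hg⟩ := h𝒞.exists_mem g
  exact ⟨D, hD, zpowers_le.mpr hg⟩

theorem isMuSubgroup_iff (h𝒞 : IsCyclicPartition 𝒞) (C : Subgroup G) :
    IsMuSubgroup C ↔ C ∈ 𝒞 := by
  constructor
  · rintro ⟨hC, hmax⟩
    obtain ⟨D, hD, hCD⟩ := h𝒞.exists_le_of_isCyclic hC
    exact hmax D (h𝒞.isCyclic D hD) hCD ▸ hD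
  · intro hC
    refine ⟨h𝒞.isCyclic C hC, fun K hK hCK => ?_⟩
    obtain ⟨D, hD, hKD⟩ := h𝒞.exists_le_of_isCyclic hK
    have hCD : C = D := h𝒞.eq_of_le hC hD (hCK.trans hKD)
    exact le_antisymm hCK (hCD ▸ hKD)

theorem not_isCyclic (h𝒞 : IsCyclicPartition 𝒞) (hnt : 𝒞.Nontrivial) : ¬ IsCyclic G := by
  intro hG
  obtain ⟨g, hg⟩ := isCyclic_iff_exists_zpowers_eq_top.mp hG
  obtain ⟨D, hD, hgD⟩ := h𝒞.exists_mem g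
  obtain ⟨C, hC, hCD⟩ := hnt.exists_ne D
  have hle : C ≤ D := le_top.trans (hg ▸ zpowers_le.mpr hgD)
  exact hCD (h𝒞.eq_of_le hC hD hle)

theorem isFlowerGroup_bot (h𝒞 : IsCyclicPartition 𝒞) (hnt : 𝒞.Nontrivial) :
    IsFlowerGroup (⊥ : Subgroup G) :=
  ⟨h𝒞.not_isCyclic hnt, fun C C' hC hC' hne => h𝒞.pairwise_inf_eq_bot
    ((h𝒞.isMuSubgroup_iff C).mp hC) ((h𝒞.isMuSubgroup_iff C').mp hC') hne⟩

end IsCyclicPartition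

section Metacyclic

variable {G : Type*} [Group G] {a b : G} {s : ℕ}

theorem pow_mul_pow_eq_of_conj_eq_pow (hrel : a * b * a⁻¹ = b ^ s) (i j : ℕ) :
    a ^ j * b ^ i = b ^ (i * s ^ j) * a ^ j := by
  have hconj : ∀ j : ℕ, a ^ j * b * (a ^ j)⁻¹ = b ^ s ^ j := by
    intro j
    induction j with
    | zero => simp
    | succ j ih =>
      calc a ^ (j + 1) * b * (a ^ (j + 1))⁻¹ = a * (a ^ j * b * (a ^ j)⁻¹) * a⁻¹ := by group
        _ = (a * b * a⁻¹) ^ s ^ j := by rw [ih, conj_pow]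
        _ = b ^ s ^ (j + 1) := by rw [hrel, ← pow_mul, pow_succ']
  calc a ^ j * b ^ i = (a ^ j * b * (a ^ j)⁻¹) ^ i * a ^ j := by rw [conj_pow]; group
    _ = b ^ (i * s ^ j) * a ^ j := by rw [hconj, ← pow_mul, mul_comm]

theorem pow_mul_pow_eq (hrel : a * b * a⁻¹ = b ^ s) (i k : ℕ) :
    (b ^ i * a) ^ k = b ^ (i * ∑ l ∈ range k, s ^ l) * a ^ k := by
  induction k with
  | zero => simp
  | succ k ih =>
    calc (b ^ i * a) ^ (k + 1)
        = b ^ (i * ∑ l ∈ range k, s ^ l) * (a ^ k * b ^ i) * a := by rw [pow_succ, ih]; group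
      _ = b ^ (i * ∑ l ∈ range (k + 1), s ^ l) * a ^ (k + 1) := by
        rw [pow_mul_pow_eq_of_conj_eq_pow hrel, sum_range_succ, mul_add, pow_add, pow_succ]
        group

theorem exists_eq_pow_mul_pow [Finite G] (hrel : a * b * a⁻¹ = b ^ s)
    (hgen : closure {a, b} = ⊤) (g : G) : ∃ i j : ℕ, g = b ^ i * a ^ j := by
  let T : Submonoid G :=
    { carrier := {x | ∃ i j : ℕ, x = b ^ i * a ^ j}
      one_mem' := ⟨0, 0, by simp⟩
      mul_mem' := by
        rintro _ _ ⟨i, j, rfl⟩ ⟨i', j', rfl⟩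
        refine ⟨i + i' * s ^ j, j + j', ?_⟩
        calc b ^ i * a ^ j * (b ^ i' * a ^ j') = b ^ i * (a ^ j * b ^ i') * a ^ j' := by group
          _ = b ^ (i + i' * s ^ j) * a ^ (j + j') := by
            rw [pow_mul_pow_eq_of_conj_eq_pow hrel, pow_add, pow_add]; group }
  have hle : Submonoid.closure {a, b} ≤ T := by
    rw [Submonoid.closure_le]
    rintro x (rfl | rfl)
    exacts [⟨0, 1, by simp⟩, ⟨1, 0, by simp⟩]
  apply hle
  rw [← closure_toSubmonoid_of_finite, hgen]
  trivial

theorem pow_mul_pow_eq_pow_mul_pow_iff [Finite G] (hcard : orderOf a * orderOf b ≤ Nat.card G)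
    (hsurj : ∀ g : G, ∃ i j : ℕ, g = b ^ i * a ^ j) {i j i' j' : ℕ} :
    b ^ i * a ^ j = b ^ i' * a ^ j' ↔ i ≡ i' [MOD orderOf b] ∧ j ≡ j' [MOD orderOf a] := by
  let f : Fin (orderOf b) × Fin (orderOf a) → G := fun p => b ^ (p.1 : ℕ) * a ^ (p.2 : ℕ)
  have hf : ∀ i j : ℕ, f (⟨i % orderOf b, Nat.mod_lt _ (orderOf_pos b)⟩,
      ⟨j % orderOf a, Nat.mod_lt _ (orderOf_pos a)⟩) = b ^ i * a ^ j := by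
    intro i j
    simp only [f, pow_mod_orderOf]
  have hinj : f.Injective := by
    refine (Function.Surjective.bijective_of_nat_card_le (fun g => ?_) ?_).injective
    · obtain ⟨i, j, rfl⟩ := hsurj g
      exact ⟨_, hf i j⟩
    · simpa [Nat.card_prod, mul_comm] using hcard
  constructor
  · intro h
    rw [← hf, ← hf] at h
    simpa [Nat.ModEq, Prod.ext_iff, Fin.ext_iff] using hinj h
  · rintro ⟨hi, hj⟩
    rw [← hf, ← hf]
    simp only [Nat.ModEq] at hi hj
    simp only [hi, hj]

end Metacyclic

def petals {G : Type*} [Group G] (a b : G) : Set (Subgroup G) :=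
  {C | C = zpowers b ∨ ∃ i < orderOf b, C = zpowers (b ^ i * a)}

section Petals

variable {G : Type*} [Group G] [Finite G] {a b : G} {s : ℕ}

theorem orderOf_dvd_of_pow_mul_pow_mem_zpowers
    (hnf : ∀ {i j i' j' : ℕ},
      b ^ i * a ^ j = b ^ i' * a ^ j' ↔ i ≡ i' [MOD orderOf b] ∧ j ≡ j' [MOD orderOf a])
    {i j : ℕ} (h : b ^ i * a ^ j ∈ zpowers b) : orderOf a ∣ j := by
  obtain ⟨l, hl : b ^ l = _⟩ := mem_powers_iff_mem_zpowers.mpr h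
  have hj : j ≡ 0 [MOD orderOf a] :=
    (hnf.mp (show b ^ i * a ^ j = b ^ l * a ^ 0 by rw [pow_zero, mul_one, hl])).2
  exact Nat.modEq_zero_iff_dvd.mp hj

theorem orderOf_pow_mul (hrel : a * b * a⁻¹ = b ^ s)
    (hnf : ∀ {i j i' j' : ℕ},
      b ^ i * a ^ j = b ^ i' * a ^ j' ↔ i ≡ i' [MOD orderOf b] ∧ j ≡ j' [MOD orderOf a])
    (hdvd : orderOf b ∣ ∑ l ∈ range (orderOf a), s ^ l) (i : ℕ) :
    orderOf (b ^ i * a) = orderOf a := by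
  apply Nat.dvd_antisymm
  · apply orderOf_dvd_of_pow_eq_one
    rw [pow_mul_pow_eq hrel, pow_orderOf_eq_one, mul_one]
    exact orderOf_dvd_iff_pow_eq_one.mp (hdvd.mul_left i)
  · have h := pow_orderOf_eq_one (b ^ i * a)
    rw [pow_mul_pow_eq hrel] at h
    exact orderOf_dvd_of_pow_mul_pow_mem_zpowers hnf (h ▸ one_mem _)

theorem zpowers_pow_mul_inf_zpowers_eq_bot (hrel : a * b * a⁻¹ = b ^ s)
    (hnf : ∀ {i j i' j' : ℕ},
      b ^ i * a ^ j = b ^ i' * a ^ j' ↔ i ≡ i' [MOD orderOf b] ∧ j ≡ j' [MOD orderOf a])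
    (hdvd : orderOf b ∣ ∑ l ∈ range (orderOf a), s ^ l) (i : ℕ) :
    zpowers (b ^ i * a) ⊓ zpowers b = ⊥ := by
  rw [eq_bot_iff]
  intro x hx
  obtain ⟨k, rfl : (b ^ i * a) ^ k = x⟩ := mem_powers_iff_mem_zpowers.mpr (mem_inf.mp hx).1
  rw [mem_bot, ← orderOf_dvd_iff_pow_eq_one, orderOf_pow_mul hrel hnf hdvd]
  have hk := (mem_inf.mp hx).2
  rw [pow_mul_pow_eq hrel] at hk
  exact orderOf_dvd_of_pow_mul_pow_mem_zpowers hnf hk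

theorem zpowers_pow_mul_inf_zpowers_pow_mul_eq_bot (hrel : a * b * a⁻¹ = b ^ s)
    (hnf : ∀ {i j i' j' : ℕ},
      b ^ i * a ^ j = b ^ i' * a ^ j' ↔ i ≡ i' [MOD orderOf b] ∧ j ≡ j' [MOD orderOf a])
    (hdvd : orderOf b ∣ ∑ l ∈ range (orderOf a), s ^ l)
    (hcop : ∀ k : ℕ, 1 ≤ k → k < orderOf a → Nat.Coprime (orderOf b) (∑ l ∈ range k, s ^ l))
    {i i' : ℕ} (hii' : ¬ i ≡ i' [MOD orderOf b]) :
    zpowers (b ^ i * a) ⊓ zpowers (b ^ i' * a) = ⊥ := by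
  classical
  have hmem : ∀ {x} (c : ℕ), x ∈ zpowers (b ^ c * a) → ∃ k < orderOf a, (b ^ c * a) ^ k = x := by
    intro x c hx
    simpa [orderOf_pow_mul hrel hnf hdvd] using mem_zpowers_iff_mem_range_orderOf.mp hx
  rw [eq_bot_iff]
  intro x hx
  obtain ⟨k, hk, rfl⟩ := hmem i (mem_inf.mp hx).1
  obtain ⟨k', hk', hkk'⟩ := hmem i' (mem_inf.mp hx).2
  rw [pow_mul_pow_eq hrel, pow_mul_pow_eq hrel, hnf] at hkk'
  obtain rfl : k' = k := hkk'.2.eq_of_lt_of_lt hk' hk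
  rcases Nat.eq_zero_or_pos k' with rfl | hk0
  · simp
  · exact absurd (Nat.ModEq.cancel_right_of_coprime (hcop k' hk0 hk) hkk'.1).symm hii'

theorem mem_zpowers_or_exists_mem_zpowers_pow_mul (hrel : a * b * a⁻¹ = b ^ s)
    (hnf : ∀ {i j i' j' : ℕ},
      b ^ i * a ^ j = b ^ i' * a ^ j' ↔ i ≡ i' [MOD orderOf b] ∧ j ≡ j' [MOD orderOf a])
    (hsurj : ∀ g : G, ∃ i j : ℕ, g = b ^ i * a ^ j) (hn : 1 < orderOf b)
    (hcop : ∀ k : ℕ, 1 ≤ k → k < orderOf a → Nat.Coprime (orderOf b) (∑ l ∈ range k, s ^ l))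
    (g : G) : g ∈ zpowers b ∨ ∃ i < orderOf b, g ∈ zpowers (b ^ i * a) := by
  obtain ⟨i, j, rfl⟩ := hsurj g
  rw [← pow_mod_orderOf a j]
  rcases Nat.eq_zero_or_pos (j % orderOf a) with hj0 | hj0
  · left
    rw [hj0, pow_zero, mul_one]
    exact pow_mem (mem_zpowers b) i
  · right
    set σ := ∑ l ∈ range (j % orderOf a), s ^ l
    obtain ⟨x, -, hx⟩ :=
      Nat.exists_mul_mod_eq_one_of_coprime (hcop _ hj0 (Nat.mod_lt _ (orderOf_pos a))).symm hn
    refine ⟨i * x % orderOf b, Nat.mod_lt _ (orderOf_pos b), ?_⟩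
    rw [pow_mod_orderOf]
    have hix : i * x * σ ≡ i [MOD orderOf b] := by
      calc i * x * σ = i * (σ * x) := by ring
        _ ≡ i * 1 [MOD orderOf b] :=
          Nat.ModEq.mul_left i (by rwa [Nat.ModEq, Nat.one_mod_eq_one.mpr hn.ne'])
        _ = i := mul_one i
    rw [← hnf.mpr ⟨hix, rfl⟩, ← pow_mul_pow_eq hrel]
    exact pow_mem (mem_zpowers _) _

theorem isCyclicPartition_petals (hrel : a * b * a⁻¹ = b ^ s)
    (hnf : ∀ {i j i' j' : ℕ},
      b ^ i * a ^ j = b ^ i' * a ^ j' ↔ i ≡ i' [MOD orderOf b] ∧ j ≡ j' [MOD orderOf a])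
    (hsurj : ∀ g : G, ∃ i j : ℕ, g = b ^ i * a ^ j) (hm : 1 < orderOf a) (hn : 1 < orderOf b)
    (hdvd : orderOf b ∣ ∑ l ∈ range (orderOf a), s ^ l)
    (hcop : ∀ k : ℕ, 1 ≤ k → k < orderOf a → Nat.Coprime (orderOf b) (∑ l ∈ range k, s ^ l)) :
    IsCyclicPartition (petals a b) where
  isCyclic := by
    rintro C (rfl | ⟨i, -, rfl⟩) <;> infer_instance
  ne_bot := by
    have hne : ∀ g : G, 1 < orderOf g → zpowers g ≠ ⊥ := by
      rintro g hg
      rw [Ne, zpowers_eq_bot]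
      rintro rfl
      simp at hg
    rintro C (rfl | ⟨i, -, rfl⟩)
    · exact hne b hn
    · exact hne _ (orderOf_pow_mul hrel hnf hdvd i ▸ hm)
  pairwise_inf_eq_bot := by
    rintro C (rfl | ⟨i, hi, rfl⟩) D (rfl | ⟨i', hi', rfl⟩) hCD
    · exact absurd rfl hCD
    · exact inf_comm (zpowers b) _ ▸ zpowers_pow_mul_inf_zpowers_eq_bot hrel hnf hdvd i'
    · exact zpowers_pow_mul_inf_zpowers_eq_bot hrel hnf hdvd i
    · refine zpowers_pow_mul_inf_zpowers_pow_mul_eq_bot hrel hnf hdvd hcop fun h => hCD ?_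
      rw [h.eq_of_lt_of_lt hi hi']
  exists_mem g := by
    rcases mem_zpowers_or_exists_mem_zpowers_pow_mul hrel hnf hsurj hn hcop g with h | ⟨i, hi, h⟩
    exacts [⟨_, Or.inl rfl, h⟩, ⟨_, Or.inr ⟨i, hi, rfl⟩, h⟩]

end Petals

theorem stmt18_general (m n s : ℕ) (hm : 1 < m) (hn : 1 < n)
    (hdvd : n ∣ ∑ j ∈ Finset.range m, s ^ j)
    (hcop : ∀ j : ℕ, 1 ≤ j → j < m → Nat.Coprime n (∑ i ∈ Finset.range j, s ^ i))
    {G : Type*} [Group G] [Finite G] (hcard : Nat.card G = m * n)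
    (a b : G) (hgen : Subgroup.closure {a, b} = ⊤)
    (hob : orderOf b = n) (hoa : orderOf a = m)
    (hrel : a * b * a⁻¹ = b ^ s) :
    IsFlowerGroup (⊥ : Subgroup G) ∧
    (∀ C : Subgroup G, IsMuSubgroup C ↔
      C = Subgroup.zpowers b ∨ ∃ i < n, C = Subgroup.zpowers (b ^ i * a)) ∧
    Nat.card (Subgroup.zpowers b) = n ∧
    (∀ i < n, Nat.card (Subgroup.zpowers (b ^ i * a)) = m) ∧
    Function.Injective (fun i : Fin n => Subgroup.zpowers (b ^ (i : ℕ) * a)) := by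
  subst hob hoa
  have hsurj := exists_eq_pow_mul_pow hrel hgen
  have hnf : ∀ {i j i' j' : ℕ},
      b ^ i * a ^ j = b ^ i' * a ^ j' ↔ i ≡ i' [MOD orderOf b] ∧ j ≡ j' [MOD orderOf a] :=
    pow_mul_pow_eq_pow_mul_pow_iff hcard.ge hsurj
  have hP := isCyclicPartition_petals hrel hnf hsurj hm hn hdvd hcop
  have hpetal : ∀ i < orderOf b, zpowers (b ^ i * a) ∈ petals a b := fun i hi => Or.inr ⟨i, hi, rfl⟩
  refine ⟨hP.isFlowerGroup_bot ?_, hP.isMuSubgroup_iff, Nat.card_zpowers b,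
    fun i _ => (Nat.card_zpowers _).trans (orderOf_pow_mul hrel hnf hdvd i), ?_⟩
  · refine ⟨_, hpetal 0 (by omega), _, Or.inl rfl, hP.ne_of_inf_eq_bot (hpetal 0 (by omega)) ?_⟩
    exact zpowers_pow_mul_inf_zpowers_eq_bot hrel hnf hdvd 0
  · intro i i' h
    by_contra hii'
    refine hP.ne_of_inf_eq_bot (hpetal i i.2) ?_ h
    exact zpowers_pow_mul_inf_zpowers_pow_mul_eq_bot hrel hnf hdvd hcop
      fun h => hii' (Fin.ext (h.eq_of_lt_of_lt i.2 i'.2))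

/-- Let m, n, s > 1 with n ∣ 1 + s + ⋯ + s^(m−1) and
gcd(n, 1 + s + ⋯ + s^(j−1)) = 1 for 1 ≤ j < m. If G is a group of order mn generated by
a and b with b^n = a^m = 1, orderOf b = n, orderOf a = m and a·b·a⁻¹ = b^s, then G is a
flower group with pistil {1}, whose petals are the n cyclic subgroups ⟨b^i a⟩ (0 ≤ i < n)
of order m together with the cyclic subgroup ⟨b⟩ of order n. -/
theorem stmt18 (m n s : ℕ) (hm : 1 < m) (hn : 1 < n) (hs : 1 < s)
    (hdvd : n ∣ ∑ j ∈ Finset.range m, s ^ j)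
    (hcop : ∀ j : ℕ, 1 ≤ j → j < m → Nat.Coprime n (∑ i ∈ Finset.range j, s ^ i))
    {G : Type*} [Group G] [Finite G] (hcard : Nat.card G = m * n)
    (a b : G) (hgen : Subgroup.closure {a, b} = ⊤)
    (hbn : b ^ n = 1) (ham : a ^ m = 1)
    (hob : orderOf b = n) (hoa : orderOf a = m)
    (hrel : a * b * a⁻¹ = b ^ s) :
    IsFlowerGroup (⊥ : Subgroup G) ∧
    (∀ C : Subgroup G, IsMuSubgroup C ↔
      C = Subgroup.zpowers b ∨ ∃ i < n, C = Subgroup.zpowers (b ^ i * a)) ∧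
    Nat.card (Subgroup.zpowers b) = n ∧
    (∀ i < n, Nat.card (Subgroup.zpowers (b ^ i * a)) = m) ∧
    Function.Injective (fun i : Fin n => Subgroup.zpowers (b ^ (i : ℕ) * a)) :=
  stmt18_general m n s hm hn hdvd hcop hcard a b hgen hob hoa hrel
end
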